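/- For every r ∈ ℝ and every fixed constant F ∈ ℝ, the function κ(s;r) = 2(F − σ(s;r)) − (r − R(s))² is differentiable in s on (s₀, ∞) with ∂_s κ(s;r) = 2 s (r − R(s)). -/

import Mathlib

open MeasureTheory Set Filter

noncomputable section

/-- `Omeg ω p = ∫₀^p ω(t) dt`, the primitive of the vorticity function. -/
def Omeg (ω : ℝ → ℝ) (p : ℝ) : ℝ := ∫ t in (0:ℝ)..p, ω t

/-- `s0 ω = sqrt (max_{p ∈ [0,1]} 2 Ω(p))`. -/
def s0 (ω : ℝ → ℝ) : ℝ := Real.sqrt (sSup ((fun p => 2 * Omeg ω p) '' Icc (0:ℝ) 1))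

/-- `Hp ω p s = (s² − 2Ω(p))^{-1/2}`. -/
def Hp (ω : ℝ → ℝ) (p s : ℝ) : ℝ := (Real.sqrt (s ^ 2 - 2 * Omeg ω p))⁻¹

/-- `Hfun ω p s = H(p; s) = ∫₀^p (s² − 2Ω(τ))^{-1/2} dτ`. -/
def Hfun (ω : ℝ → ℝ) (p s : ℝ) : ℝ := ∫ τ in (0:ℝ)..p, Hp ω τ s

/-- `dd ω s = d(s) = H(1; s)`. -/
def dd (ω : ℝ → ℝ) (s : ℝ) : ℝ := Hfun ω 1 s

/-- `RR ω s = R(s) = s²/2 − Ω(1) + d(s)`, the Bernoulli constant of the stream solution. -/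
def RR (ω : ℝ → ℝ) (s : ℝ) : ℝ := s ^ 2 / 2 - Omeg ω 1 + dd ω s

/-- `sigmaFun ω s r = σ(s; r)`. -/
def sigmaFun (ω : ℝ → ℝ) (s r : ℝ) : ℝ :=
  ∫ p in (0:ℝ)..1,
    (1 / (2 * (Hp ω p s) ^ 2) - Hfun ω p s - Omeg ω p + Omeg ω 1 + r) * Hp ω p s

/-- Partial derivative in the first (horizontal) variable `q`. -/
def dq (f : ℝ → ℝ → ℝ) (q p : ℝ) : ℝ := deriv (fun x => f x p) q

/-- Partial derivative in the second (vertical) variable `p`. -/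
def dp (f : ℝ → ℝ → ℝ) (q p : ℝ) : ℝ := deriv (fun y => f q y) p

/-- The height system with Bernoulli constant `r` on the strip `S = ℝ × [0,1]`. -/
structure HeightSol (ω : ℝ → ℝ) (r : ℝ) (h : ℝ → ℝ → ℝ) : Prop where
  smooth : ContDiff ℝ 2 (Function.uncurry h)
  hp_pos : ∀ q : ℝ, ∀ p ∈ Icc (0:ℝ) 1, 0 < dp h q p
  pde : ∀ q : ℝ, ∀ p ∈ Icc (0:ℝ) 1,
    (1 + (dq h q p) ^ 2) / (dp h q p) ^ 2 * dp (dp h) q p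
      - 2 * (dq h q p) / (dp h q p) * dp (dq h) q p
      + dq (dq h) q p - ω p * dp h q p = 0
  top : ∀ q : ℝ, (1 + (dq h q 1) ^ 2) / (2 * (dp h q 1) ^ 2) + h q 1 = r
  bot : ∀ q : ℝ, h q 0 = 0

/-- The flow force of a height function `h`, computed on the vertical line through `q`. -/
def flowForce (ω : ℝ → ℝ) (r : ℝ) (h : ℝ → ℝ → ℝ) (q : ℝ) : ℝ :=
  ∫ p in (0:ℝ)..1,
    ((1 - (dq h q p) ^ 2) / (2 * (dp h q p) ^ 2) - h q p - Omeg ω p + Omeg ω 1 + r) * dp h q p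

/-- `wfun ω s h = w^{(s)} = h − H(·; s)`. -/
def wfun (ω : ℝ → ℝ) (s : ℝ) (h : ℝ → ℝ → ℝ) (q p : ℝ) : ℝ := h q p - Hfun ω p s

/-- The flow force flux function `Φ^{(s)}`. -/
def Phi (ω : ℝ → ℝ) (s : ℝ) (h : ℝ → ℝ → ℝ) (q p : ℝ) : ℝ :=
  ∫ p' in (0:ℝ)..p,
    ((dp (wfun ω s h) q p') ^ 2 / (dp h q p' * (Hp ω p' s) ^ 2)
      - (dq (wfun ω s h) q p') ^ 2 / dp h q p')

/-- `h ∈ C^{2,γ}(S̄)`: `h` is twice continuously differentiable, all partial derivatives of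
order ≤ 2 are bounded on the strip, and the second-order derivatives are uniformly
γ-Hölder continuous on the strip. -/
def C2Holder (γ : ℝ) (h : ℝ → ℝ → ℝ) : Prop :=
  ContDiff ℝ 2 (Function.uncurry h) ∧
  (∀ g ∈ ([h, dq h, dp h, dq (dq h), dp (dq h), dp (dp h)] : List (ℝ → ℝ → ℝ)),
    ∃ M : ℝ, ∀ q : ℝ, ∀ p ∈ Icc (0:ℝ) 1, |g q p| ≤ M) ∧
  (∀ g ∈ ([dq (dq h), dp (dq h), dp (dp h)] : List (ℝ → ℝ → ℝ)),
    ∃ C : ℝ, ∀ q q' : ℝ, ∀ p ∈ Icc (0:ℝ) 1, ∀ p' ∈ Icc (0:ℝ) 1,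
      |g q p - g q' p'| ≤ C * Real.sqrt ((q - q') ^ 2 + (p - p') ^ 2) ^ γ)

end

/-!
For `s > s₀` put `G(s, p) = s² − 2Ω(p) > 0`. Then `H_p = G^{-1/2}`, so `1 / (2 H_p²) = G / 2`, and
`∫₀¹ H H_p dp = d² / 2`; hence `σ(s; r) = ∫₀¹ √G dp + (Ω(1) + r − s²/2) d(s) − d(s)² / 2`.
Differentiating under the integral sign, with `∂_s √G = s H_p`, gives `∂_s σ = (r − R(s)) d'(s)`.
Since `R'(s) = s + d'(s)`, the `d'` terms cancel in `∂_s κ`.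
-/

open Topology
open scoped Interval

theorem intervalIntegral.hasDerivAt_integral_of_continuousOn {F F' : ℝ → ℝ → ℝ} {U : Set ℝ}
    {a b x₀ : ℝ} (hU : IsOpen U) (hx₀ : x₀ ∈ U)
    (hF : ContinuousOn (Function.uncurry F) (U ×ˢ [[a, b]]))
    (hF' : ContinuousOn (Function.uncurry F') (U ×ˢ [[a, b]]))
    (hderiv : ∀ x ∈ U, ∀ t ∈ [[a, b]], HasDerivAt (F · t) (F' x t) x) :
    HasDerivAt (fun x => ∫ t in a..b, F x t) (∫ t in a..b, F' x₀ t) x₀ := by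
  obtain ⟨δ, hδ, hball⟩ := Metric.nhds_basis_closedBall.mem_iff.1 (hU.mem_nhds hx₀)
  obtain ⟨C, hC⟩ := ((isCompact_closedBall x₀ δ).prod isCompact_uIcc).exists_bound_of_continuousOn
    (hF'.mono (prod_mono hball subset_rfl))
  have slice : ∀ {G : ℝ → ℝ → ℝ}, ContinuousOn (Function.uncurry G) (U ×ˢ [[a, b]]) →
      ∀ x ∈ U, AEStronglyMeasurable (G x) (volume.restrict (Ι a b)) := fun hG x hx =>
    ((hG.comp (Continuous.prodMk_right x).continuousOn fun t ht => ⟨hx, ht⟩).mono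
      uIoc_subset_uIcc).aestronglyMeasurable measurableSet_uIoc
  refine (intervalIntegral.hasDerivAt_integral_of_dominated_loc_of_deriv_le (bound := fun _ => C)
    (Metric.closedBall_mem_nhds x₀ hδ) ?_ ?_ (slice hF' x₀ hx₀) ?_ intervalIntegrable_const ?_).2
  · filter_upwards [hU.mem_nhds hx₀] with x hx using slice hF x hx
  · exact (hF.comp (Continuous.prodMk_right x₀).continuousOn
      fun t ht => ⟨hx₀, ht⟩).intervalIntegrable
  · exact ae_of_all _ fun t ht x hx => hC (x, t) ⟨hx, uIoc_subset_uIcc ht⟩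
  · exact ae_of_all _ fun t ht x hx => hderiv x (hball hx) t (uIoc_subset_uIcc ht)

theorem intervalIntegral.integral_primitive_mul_self {f : ℝ → ℝ} {a b : ℝ} (hab : a ≤ b)
    (hf : ContinuousOn f (Icc a b)) :
    ∫ t in a..b, (∫ τ in a..t, f τ) * f t = (∫ t in a..b, f t) ^ 2 / 2 := by
  have hprim : ContinuousOn (fun t => ∫ τ in a..t, f τ) (Icc a b) :=
    intervalIntegral.continuousOn_primitive_interval' (hf.intervalIntegrable_of_Icc hab)
      left_mem_uIcc |>.mono (by rw [uIcc_of_le hab])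
  have hderiv : ∀ t ∈ Ioo a b, HasDerivAt (fun t => (∫ τ in a..t, f τ) ^ 2 / 2)
      ((∫ τ in a..t, f τ) * f t) t := fun t ht => by
    have hFTC := intervalIntegral.integral_hasDerivAt_right
      ((hf.mono (Icc_subset_Icc le_rfl ht.2.le)).intervalIntegrable_of_Icc ht.1.le)
      ((hf.mono Ioo_subset_Icc_self).stronglyMeasurableAtFilter isOpen_Ioo t ht)
      (hf.continuousAt (Icc_mem_nhds ht.1 ht.2))
    refine ((hFTC.fun_pow 2).div_const 2).congr_deriv ?_
    ring
  rw [intervalIntegral.integral_eq_sub_of_hasDeriv_right_of_le hab ((hprim.fun_pow 2).div_const 2)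
    (fun t ht => (hderiv t ht).hasDerivWithinAt) ((hprim.mul hf).intervalIntegrable_of_Icc hab)]
  simp

theorem continuous_Omeg {ω : ℝ → ℝ} (hω : Continuous ω) : Continuous (Omeg ω) :=
  intervalIntegral.continuous_primitive (fun a b => hω.intervalIntegrable a b) 0

theorem two_mul_Omeg_le_s0_sq {ω : ℝ → ℝ} (hω : Continuous ω) {p : ℝ} (hp : p ∈ Icc (0:ℝ) 1) :
    2 * Omeg ω p ≤ s0 ω ^ 2 := by
  have hbdd : BddAbove ((fun p => 2 * Omeg ω p) '' Icc (0:ℝ) 1) :=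
    (isCompact_Icc.image (continuous_const.mul (continuous_Omeg hω))).bddAbove
  have hle : ∀ p ∈ Icc (0:ℝ) 1, 2 * Omeg ω p ≤ sSup ((fun p => 2 * Omeg ω p) '' Icc (0:ℝ) 1) :=
    fun p hp => le_csSup hbdd (mem_image_of_mem _ hp)
  have hnonneg := hle 0 (left_mem_Icc.2 zero_le_one)
  rw [show Omeg ω 0 = 0 from intervalIntegral.integral_same, mul_zero] at hnonneg
  rw [s0, Real.sq_sqrt hnonneg]
  exact hle p hp

theorem sq_sub_two_mul_Omeg_pos {ω : ℝ → ℝ} (hω : Continuous ω) {s p : ℝ} (hs : s0 ω < s)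
    (hp : p ∈ Icc (0:ℝ) 1) : 0 < s ^ 2 - 2 * Omeg ω p := by
  have := two_mul_Omeg_le_s0_sq hω hp
  nlinarith [pow_lt_pow_left₀ hs (Real.sqrt_nonneg _ : 0 ≤ s0 ω) two_ne_zero]

theorem continuousOn_Hp {ω : ℝ → ℝ} (hω : Continuous ω) :
    ContinuousOn (fun z : ℝ × ℝ => Hp ω z.2 z.1) (Ioi (s0 ω) ×ˢ Icc 0 1) := by
  have := continuous_Omeg hω
  refine ContinuousOn.inv₀ (by fun_prop) fun z hz => ?_
  exact (Real.sqrt_pos.2 (sq_sub_two_mul_Omeg_pos hω hz.1 hz.2)).ne'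

theorem continuousOn_Hp_left {ω : ℝ → ℝ} (hω : Continuous ω) {s : ℝ} (hs : s0 ω < s) :
    ContinuousOn (fun p => Hp ω p s) (Icc 0 1) :=
  (continuousOn_Hp hω).comp (Continuous.prodMk_right s).continuousOn fun _ hp => ⟨hs, hp⟩

theorem hasDerivAt_sqrt_sq_sub {c s : ℝ} (hc : 0 < s ^ 2 - c) :
    HasDerivAt (fun x => √(x ^ 2 - c)) (s * (√(s ^ 2 - c))⁻¹) s := by
  have hsq := ((hasDerivAt_pow 2 s).sub_const c).sqrt hc.ne'
  refine hsq.congr_deriv ?_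
  field_simp
  norm_num

theorem hasDerivAt_inv_sqrt_sq_sub {c s : ℝ} (hc : 0 < s ^ 2 - c) :
    HasDerivAt (fun x => (√(x ^ 2 - c))⁻¹) (-(s * (√(s ^ 2 - c))⁻¹ ^ 3)) s := by
  refine ((hasDerivAt_sqrt_sq_sub hc).inv (Real.sqrt_pos.2 hc).ne').congr_deriv ?_
  field_simp

noncomputable def sqrtIntegral (ω : ℝ → ℝ) (s : ℝ) : ℝ := ∫ p in (0:ℝ)..1, √(s ^ 2 - 2 * Omeg ω p)

theorem hasDerivAt_sqrtIntegral {ω : ℝ → ℝ} (hω : Continuous ω) {s : ℝ} (hs : s0 ω < s) :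
    HasDerivAt (sqrtIntegral ω) (s * dd ω s) s := by
  have := continuous_Omeg hω
  have h := intervalIntegral.hasDerivAt_integral_of_continuousOn (F' := fun x p => x * Hp ω p x)
    isOpen_Ioi hs (by fun_prop)
    (by rw [uIcc_of_le zero_le_one]; exact continuousOn_fst.mul (continuousOn_Hp hω))
    fun x hx p hp => hasDerivAt_sqrt_sq_sub
      (sq_sub_two_mul_Omeg_pos hω hx (by rwa [uIcc_of_le zero_le_one] at hp))
  rwa [intervalIntegral.integral_const_mul] at h

theorem hasDerivAt_dd {ω : ℝ → ℝ} (hω : Continuous ω) {s : ℝ} (hs : s0 ω < s) :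
    HasDerivAt (dd ω) (∫ p in (0:ℝ)..1, -(s * Hp ω p s ^ 3)) s :=
  intervalIntegral.hasDerivAt_integral_of_continuousOn (F := fun x p => Hp ω p x) isOpen_Ioi hs
    (by rw [uIcc_of_le zero_le_one]; exact continuousOn_Hp hω)
    (by rw [uIcc_of_le zero_le_one]; exact (continuousOn_fst.mul ((continuousOn_Hp hω).pow 3)).neg)
    fun x hx p hp => hasDerivAt_inv_sqrt_sq_sub
      (sq_sub_two_mul_Omeg_pos hω hx (by rwa [uIcc_of_le zero_le_one] at hp))

theorem integral_Hfun_mul_Hp {ω : ℝ → ℝ} (hω : Continuous ω) {s : ℝ} (hs : s0 ω < s) :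
    ∫ p in (0:ℝ)..1, Hfun ω p s * Hp ω p s = dd ω s ^ 2 / 2 :=
  intervalIntegral.integral_primitive_mul_self zero_le_one (continuousOn_Hp_left hω hs)

theorem sigmaFun_integrand_eq {ω : ℝ → ℝ} (hω : Continuous ω) {s p : ℝ} (hs : s0 ω < s)
    (hp : p ∈ Icc (0:ℝ) 1) (r : ℝ) :
    (1 / (2 * Hp ω p s ^ 2) - Hfun ω p s - Omeg ω p + Omeg ω 1 + r) * Hp ω p s
      = √(s ^ 2 - 2 * Omeg ω p) + (Omeg ω 1 + r - s ^ 2 / 2) * Hp ω p s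
        - Hfun ω p s * Hp ω p s := by
  have hG := sq_sub_two_mul_Omeg_pos hω hs hp
  have hsqrt := (Real.sqrt_pos.2 hG).ne'
  simp only [Hp]
  field_simp
  rw [Real.sq_sqrt hG.le]
  ring

theorem sigmaFun_eq {ω : ℝ → ℝ} (hω : Continuous ω) {s : ℝ} (hs : s0 ω < s) (r : ℝ) :
    sigmaFun ω s r = sqrtIntegral ω s + (Omeg ω 1 + r - s ^ 2 / 2) * dd ω s - dd ω s ^ 2 / 2 := by
  have hHp := continuousOn_Hp_left hω hs
  have hHfun : ContinuousOn (fun p => Hfun ω p s) (Icc 0 1) :=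
    intervalIntegral.continuousOn_primitive_interval' (hHp.intervalIntegrable_of_Icc zero_le_one)
      left_mem_uIcc |>.mono (by rw [uIcc_of_le zero_le_one])
  have hsqrt : Continuous fun p => √(s ^ 2 - 2 * Omeg ω p) := by
    have := continuous_Omeg hω
    fun_prop
  rw [sigmaFun, intervalIntegral.integral_congr fun p hp =>
      sigmaFun_integrand_eq hω hs (by rwa [uIcc_of_le zero_le_one] at hp) r,
    intervalIntegral.integral_sub, intervalIntegral.integral_add,
    intervalIntegral.integral_const_mul, integral_Hfun_mul_Hp hω hs]
  · rfl
  · exact hsqrt.intervalIntegrable 0 1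
  · exact (continuousOn_const.mul hHp).intervalIntegrable_of_Icc zero_le_one
  · exact ((hsqrt.intervalIntegrable 0 1).add
      ((continuousOn_const.mul hHp).intervalIntegrable_of_Icc zero_le_one))
  · exact (hHfun.mul hHp).intervalIntegrable_of_Icc zero_le_one

theorem hasDerivAt_sigmaFun {ω : ℝ → ℝ} (hω : Continuous ω) {s : ℝ} (hs : s0 ω < s) (r : ℝ) :
    HasDerivAt (fun x => sigmaFun ω x r) ((r - RR ω s) * deriv (dd ω) s) s := by
  have hd := (hasDerivAt_dd hω hs).differentiableAt.hasDerivAt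
  have heq : (fun x => sigmaFun ω x r) =ᶠ[𝓝 s] fun x =>
      sqrtIntegral ω x + (Omeg ω 1 + r - x ^ 2 / 2) * dd ω x - dd ω x ^ 2 / 2 := by
    filter_upwards [Ioi_mem_nhds hs] with x hx using sigmaFun_eq hω hx r
  refine (((hasDerivAt_sqrtIntegral hω hs).add
    ((((hasDerivAt_pow 2 s).div_const 2).const_sub _).mul hd)).sub
    ((hd.fun_pow 2).div_const 2)).congr_of_eventuallyEq heq |>.congr_deriv ?_
  simp only [RR]
  ring

theorem hasDerivAt_RR {ω : ℝ → ℝ} (hω : Continuous ω) {s : ℝ} (hs : s0 ω < s) :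
    HasDerivAt (RR ω) (s + deriv (dd ω) s) s := by
  refine ((((hasDerivAt_pow 2 s).div_const 2).sub_const _).add
    (hasDerivAt_dd hω hs).differentiableAt.hasDerivAt).congr_deriv ?_
  ring

/-- for every `r` and fixed `F`, the function
`κ(s;r) = 2(F − σ(s;r)) − (r − R(s))²` is differentiable in `s` on `(s₀, ∞)` with
`∂_s κ(s;r) = 2 s (r − R(s))`. -/
theorem stmt9 (ω : ℝ → ℝ) (hω : Continuous ω) (r F : ℝ) :
    ∀ s ∈ Ioi (s0 ω),
      HasDerivAt (fun s' => 2 * (F - sigmaFun ω s' r) - (r - RR ω s') ^ 2)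
        (2 * s * (r - RR ω s)) s := by
  intro s hs
  refine ((((hasDerivAt_sigmaFun hω hs r).const_sub F).const_mul 2).sub
    (((hasDerivAt_RR hω hs).const_sub r).fun_pow 2)).congr_deriv ?_
  ring
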